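/- Let G be a finite safety game with unsafe states U and G^a a conservative abstraction with abstract unsafe set U^a satisfying γ(U^a) = U. If the initial abstract state q_I^a is not in the least fixpoint of X ↦ U^a ∪ upre_over(X), then the concrete initial state q_I is not in upre*(U); i.e., if Eve wins the abstract game then Eve wins the concrete game. -/

import Mathlib

/-- Abstract transition relation: existential lift of the concrete transition function. -/
def absDelta {Q Au Ac : Type*} (δ : Q → Au → Ac → Q) (P : Set (Set Q))
    (s : Set Q) (σu : Au) (σc : Ac) (s' : Set Q) : Prop :=
  s ∈ P ∧ s' ∈ P ∧ ∃ q ∈ s, δ q σu σc ∈ s'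

/-- Concrete uncontrollable predecessors. -/
def upre {Q Au Ac : Type*} (δ : Q → Au → Ac → Q) (S : Set Q) : Set Q :=
  {q | ∃ σu : Au, ∀ σc : Ac, δ q σu σc ∈ S}

/-- Over-approximating abstract uncontrollable predecessors. -/
def upreOver {Q Au Ac : Type*} (δ : Q → Au → Ac → Q) (P : Set (Set Q))
    (Sa : Set (Set Q)) : Set (Set Q) :=
  {qa ∈ P | ∃ σu : Au, ∀ σc : Ac, ∃ ra ∈ Sa, absDelta δ P qa σu σc ra}

/-- Least fixpoint of a set operator (intersection of prefixed points). -/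
def lfpSet {α : Type*} (F : Set α → Set α) : Set α := ⋂₀ {X | F X ⊆ X}

/-!
The concretization `⋃₀ La` of the abstract attractor `La` is a prefixed point of the concrete
operator `X ↦ U ∪ upre δ X`: a move of Eve's opponent from `q` that forces `⋃₀ La` is also
available, via the existential lift, from the block of `q`. Hence the concrete attractor lies in
`⋃₀ La`, and as `{qI}` is the only block containing `qI`, `qI` losing concretely forces `{qI} ∈ La`.
-/

section lfpSet

variable {α : Type*} {F : Set α → Set α}

lemma lfpSet_subset {X : Set α} (h : F X ⊆ X) : lfpSet F ⊆ X :=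
  Set.sInter_subset_of_mem h

lemma map_lfpSet_subset (hF : Monotone F) : F (lfpSet F) ⊆ lfpSet F :=
  fun _ ha => Set.mem_sInter.2 fun _ hX => hX (hF (lfpSet_subset hX) ha)

end lfpSet

section Abstraction

variable {Q Au Ac : Type*} (δ : Q → Au → Ac → Q) (P : Set (Set Q))

lemma upreOver_mono : Monotone (upreOver δ P) :=
  fun _ _ hXY _ ⟨hqa, σu, hσ⟩ => ⟨hqa, σu, fun σc =>
    let ⟨ra, hra, hd⟩ := hσ σc
    ⟨ra, hXY hra, hd⟩⟩

lemma upreOver_subset (Sa : Set (Set Q)) : upreOver δ P Sa ⊆ P :=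
  fun _ h => h.1

lemma upre_sUnion_subset (hcover : ⋃₀ P = Set.univ) {Sa : Set (Set Q)} (hSa : Sa ⊆ P) :
    upre δ (⋃₀ Sa) ⊆ ⋃₀ upreOver δ P Sa := by
  rintro q ⟨σu, hσ⟩
  obtain ⟨qa, hqa, hq⟩ := Set.mem_sUnion.1 (hcover ▸ Set.mem_univ q)
  refine ⟨qa, ⟨hqa, σu, fun σc => ?_⟩, hq⟩
  obtain ⟨ra, hra, hδ⟩ := hσ σc
  exact ⟨ra, hra, hqa, hSa hra, q, hq, hδ⟩

variable {U : Set Q} {Ua : Set (Set Q)}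

lemma lfpSet_upreOver_subset (hUa : Ua ⊆ P) :
    lfpSet (fun X => Ua ∪ upreOver δ P X) ⊆ P :=
  lfpSet_subset (Set.union_subset hUa (upreOver_subset δ P _))

lemma lfpSet_upre_subset_sUnion_lfpSet_upreOver (hcover : ⋃₀ P = Set.univ) (hUa : Ua ⊆ P)
    (hGamma : ⋃₀ Ua = U) :
    lfpSet (fun X => U ∪ upre δ X) ⊆ ⋃₀ lfpSet (fun X => Ua ∪ upreOver δ P X) := by
  set La := lfpSet (fun X => Ua ∪ upreOver δ P X)
  have hLa : Ua ∪ upreOver δ P La ⊆ La :=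
    map_lfpSet_subset fun _ _ hXY => Set.union_subset_union_right _ (upreOver_mono δ P hXY)
  refine lfpSet_subset (Set.union_subset ?_ ?_)
  · exact hGamma ▸ Set.sUnion_mono (Set.subset_union_left.trans hLa)
  · exact (upre_sUnion_subset δ P hcover (lfpSet_upreOver_subset δ P hUa)).trans
      (Set.sUnion_mono (Set.subset_union_right.trans hLa))

end Abstraction

theorem stmt_6_general {Q Au Ac : Type*}
    (δ : Q → Au → Ac → Q) (qI : Q)
    (P : Set (Set Q)) (hP : Setoid.IsPartition P) (hqI : {qI} ∈ P)
    (U : Set Q) (Ua : Set (Set Q)) (hUa : Ua ⊆ P) (hGamma : ⋃₀ Ua = U)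
    (hEveAbs : {qI} ∉ lfpSet (fun X => Ua ∪ upreOver δ P X)) :
    qI ∉ lfpSet (fun X => U ∪ upre δ X) := by
  intro hqI_lose
  obtain ⟨ra, hra, hqI_ra⟩ :=
    lfpSet_upre_subset_sUnion_lfpSet_upreOver δ P hP.sUnion_eq_univ hUa hGamma hqI_lose
  have hra_eq : ra = {qI} :=
    (hP.2 qI).unique ⟨lfpSet_upreOver_subset δ P hUa hra, hqI_ra⟩ ⟨hqI, rfl⟩
  exact hEveAbs (hra_eq ▸ hra)

theorem stmt_6 {Q Au Ac : Type*} [Fintype Q] [Fintype Au] [Fintype Ac]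
    (δ : Q → Au → Ac → Q) (qI : Q)
    (P : Set (Set Q)) (hP : Setoid.IsPartition P) (hqI : {qI} ∈ P)
    (U : Set Q) (Ua : Set (Set Q)) (hUa : Ua ⊆ P) (hGamma : ⋃₀ Ua = U)
    (hEveAbs : {qI} ∉ lfpSet (fun X => Ua ∪ upreOver δ P X)) :
    qI ∉ lfpSet (fun X => U ∪ upre δ X) :=
  stmt_6_general δ qI P hP hqI U Ua hUa hGamma hEveAbs
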